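/- Let d_min, R_o, r_d ≥ 0 and set r_safe = d_min + R_o + r_d; for x, o ∈ EuclideanSpace ℝ (Fin 3) define H(x, o) = ‖x − o‖ − r_safe. Let x_k, x_{k+1}, o_k, o_{k+1}, ô_{k+1} ∈ EuclideanSpace ℝ (Fin 3) and γ ∈ ℝ with 0 < γ ≤ 1. If ‖o_{k+1} − ô_{k+1}‖ ≤ r_d, H(x_k, o_k) ≥ 0, and the CBF-guided safety criterion H(x_{k+1}, ô_{k+1}) − H(x_k, o_k) + γ·H(x_k, o_k) ≥ 0 holds, then ‖x_{k+1} − o_{k+1}‖ − d_min − R_o ≥ 0, i.e. x_{k+1} lies in the safe set. -/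

import Mathlib

/-!
Since `γ ≤ 1`, the criterion gives `H(x_{k+1}, ô_{k+1}) ≥ (1 - γ) H(x_k, o_k) ≥ 0`, i.e. clearance
`r_safe` from the estimate; the tolerance `r_d` built into `r_safe` absorbs the estimation error
by the triangle inequality.
-/

theorem nonneg_of_sub_add_mul_nonneg {h₀ h₁ γ : ℝ} (hγ : γ ≤ 1) (h₀_nonneg : 0 ≤ h₀)
    (hstep : 0 ≤ h₁ - h₀ + γ * h₀) : 0 ≤ h₁ := by
  nlinarith

theorem le_norm_sub_of_add_le_norm_sub {E : Type*} [SeminormedAddGroup E] {x o ô : E} {r ε : ℝ}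
    (h : r + ε ≤ ‖x - ô‖) (herr : ‖o - ô‖ ≤ ε) : r ≤ ‖x - o‖ := by
  linarith [norm_sub_le_norm_sub_add_norm_sub x o ô]

theorem cbfsc_single_step_safety_general
    (dmin Ro rd : ℝ)
    (rsafe : ℝ) (hrsafe : rsafe = dmin + Ro + rd)
    (H : EuclideanSpace ℝ (Fin 3) → EuclideanSpace ℝ (Fin 3) → ℝ)
    (hH : ∀ x o : EuclideanSpace ℝ (Fin 3), H x o = ‖x - o‖ - rsafe)
    (xk xk1 ok ok1 ohatk1 : EuclideanSpace ℝ (Fin 3))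
    (γ : ℝ) (hγ1 : γ ≤ 1)
    (herr : ‖ok1 - ohatk1‖ ≤ rd)
    (hsafe : H xk ok ≥ 0)
    (hcbf : H xk1 ohatk1 - H xk ok + γ * H xk ok ≥ 0) :
    ‖xk1 - ok1‖ - dmin - Ro ≥ 0 := by
  have hnext : 0 ≤ H xk1 ohatk1 := nonneg_of_sub_add_mul_nonneg hγ1 hsafe hcbf
  rw [hH, hrsafe] at hnext
  have hclear : dmin + Ro ≤ ‖xk1 - ok1‖ := le_norm_sub_of_add_le_norm_sub (by linarith) herr
  linarith

/-- Single-step content of Theorem 1: with `r_safe = d_min + R_o + r_d` and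
`H x o = ‖x - o‖ - r_safe`, if the observer error satisfies
`‖o_{k+1} - ohat_{k+1}‖ ≤ r_d`, `H x_k o_k ≥ 0` and the CBF-guided safety
criterion `H x_{k+1} ohat_{k+1} - H x_k o_k + γ H x_k o_k ≥ 0` holds with
`0 < γ ≤ 1`, then `‖x_{k+1} - o_{k+1}‖ - d_min - R_o ≥ 0`. -/
theorem cbfsc_single_step_safety
    (dmin Ro rd : ℝ) (hdmin : 0 ≤ dmin) (hRo : 0 ≤ Ro) (hrd : 0 ≤ rd)
    (rsafe : ℝ) (hrsafe : rsafe = dmin + Ro + rd)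
    (H : EuclideanSpace ℝ (Fin 3) → EuclideanSpace ℝ (Fin 3) → ℝ)
    (hH : ∀ x o : EuclideanSpace ℝ (Fin 3), H x o = ‖x - o‖ - rsafe)
    (xk xk1 ok ok1 ohatk1 : EuclideanSpace ℝ (Fin 3))
    (γ : ℝ) (hγ0 : 0 < γ) (hγ1 : γ ≤ 1)
    (herr : ‖ok1 - ohatk1‖ ≤ rd)
    (hsafe : H xk ok ≥ 0)
    (hcbf : H xk1 ohatk1 - H xk ok + γ * H xk ok ≥ 0) :
    ‖xk1 - ok1‖ - dmin - Ro ≥ 0 :=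
  cbfsc_single_step_safety_general dmin Ro rd rsafe hrsafe H hH xk xk1 ok ok1 ohatk1 γ hγ1 herr
    hsafe hcbf
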